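/- Let k ≥ 2 and let φ₀, φ₁, …, φ_{k−1} ∈ ℋ be such that φ₀ ≠ 0, N₀ φ₀ = z₀ φ₀, and (N₀ − z₀) φ_j = −j W φ_{j−1} for all j = 1, …, k−1. Then: (1) for each j = 0, …, k−1 the vector φ_j is a resonance vector of order exactly j+1, that is, (1 − v R(v) W)^(j+1) φ_j = 0 and (1 − v R(v) W)^j φ_j ≠ 0 for every v with 0 < |v| ≤ r; (2) A φ_j = j φ_{j−1} for j = 1, …, k−1; (3) φ₀ has depth at least k−1, i.e. φ₀ ∈ range(A^(k−1)). -/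
import Mathlib


open Complex MeasureTheory ContinuousLinearMap
open scoped InnerProductSpace

lemma circleIntegral_finset_sum' {E : Type*} [NormedAddCommGroup E] [NormedSpace ℂ E]
    {ι : Type*} (s : Finset ι) (f : ι → ℂ → E) (c : ℂ) (R : ℝ)
    (h : ∀ i ∈ s, CircleIntegrable (f i) c R) :
    (∮ z in C(c, R), ∑ i ∈ s, f i z) = ∑ i ∈ s, ∮ z in C(c, R), f i z := by
  simp only [circleIntegral, Finset.smul_sum]
  exact intervalIntegral.integral_finset_sum fun i hi => (h i hi).out

lemma circleIntegral_clm_apply {H E : Type*} [NormedAddCommGroup H] [NormedSpace ℂ H]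
    [NormedAddCommGroup E] [NormedSpace ℂ E]
    {F : ℂ → (H →L[ℂ] E)} {c : ℂ} {R : ℝ} (hF : CircleIntegrable F c R) (x : H) :
    (∮ z in C(c, R), F z) x = ∮ z in C(c, R), F z x := by
  have h2π : (0:ℝ) ≤ 2 * Real.pi := by positivity
  have hout := hF.out
  rw [circleIntegral, circleIntegral, intervalIntegral.integral_of_le h2π,
    intervalIntegral.integral_of_le h2π, ContinuousLinearMap.integral_apply hout.1]
  simp only [ContinuousLinearMap.smul_apply]

/-- The nilpotent operator `A = K₋₁ ∘ W`, where
`K₋₁ = (2πi)⁻¹ ∮_{|v|=r} v • R(v) dv`. -/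
noncomputable def resA {H : Type*} [NormedAddCommGroup H] [NormedSpace ℂ H]
    (R : ℂ → (H →L[ℂ] H)) (W : H →L[ℂ] H) (r : ℝ) : H →L[ℂ] H :=
  ((2 * (Real.pi : ℂ) * Complex.I)⁻¹ • ∮ v in C(0, r), v • R v) * W

/-- if `φ₀ ≠ 0` is an eigenvector of `N₀` at `z₀` and
`(N₀ - z₀) φ_j = -j W φ_{j-1}` for `j = 1, …, k-1`, then each `φ_j` is a resonance
vector of order exactly `j+1`, `A φ_j = j φ_{j-1}`, and `φ₀` has depth at least `k-1`. -/
theorem jordan_chain_gives_resonance_vectors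
    {H : Type*} [NormedAddCommGroup H] [InnerProductSpace ℂ H] [CompleteSpace H]
    (N₀ W : H →L[ℂ] H) (z₀ : ℂ) (r : ℝ) (hr : 0 < r)
    (R : ℂ → (H →L[ℂ] H))
    (hR : ∀ v : ℂ, v ≠ 0 → ‖v‖ ≤ r →
      (N₀ + v • W - z₀ • (1 : H →L[ℂ] H)) * R v = 1 ∧
      R v * (N₀ + v • W - z₀ • (1 : H →L[ℂ] H)) = 1)
    (k : ℕ) (hk : 2 ≤ k) (φ : ℕ → H) (hφ0ne : φ 0 ≠ 0)
    (heig : N₀ (φ 0) = z₀ • φ 0)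
    (hchain : ∀ j : ℕ, 1 ≤ j → j < k →
      (N₀ - z₀ • (1 : H →L[ℂ] H)) (φ j) = (-(j : ℂ)) • W (φ (j - 1))) :
    -- (1) `φ_j` is a resonance vector of order exactly `j + 1`
    (∀ j : ℕ, j < k → ∀ v : ℂ, v ≠ 0 → ‖v‖ ≤ r →
      (((1 : H →L[ℂ] H) - v • (R v * W)) ^ (j + 1)) (φ j) = 0 ∧
      (((1 : H →L[ℂ] H) - v • (R v * W)) ^ j) (φ j) ≠ 0) ∧
    -- (2) `A φ_j = j φ_{j-1}`
    (∀ j : ℕ, 1 ≤ j → j < k → resA R W r (φ j) = (j : ℂ) • φ (j - 1)) ∧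
    -- (3) `φ₀` has depth at least `k - 1`
    φ 0 ∈ Set.range ⇑(resA R W r ^ (k - 1)) := by
  have hπ : (2 * (Real.pi : ℂ) * Complex.I) ≠ 0 := by
    simp [Real.pi_ne_zero, Complex.I_ne_zero]
  -- basic identities
  have hA0 : ∀ v : ℂ, v ≠ 0 → ‖v‖ ≤ r → φ 0 = v • (R v) (W (φ 0)) := by
    intro v hv hvr
    have h1 : (N₀ + v • W - z₀ • (1 : H →L[ℂ] H)) (φ 0) = v • W (φ 0) := by
      simp [ContinuousLinearMap.add_apply, ContinuousLinearMap.sub_apply,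
        ContinuousLinearMap.smul_apply, ContinuousLinearMap.one_apply, heig]
    have h2 := congrArg (fun T : H →L[ℂ] H => T (φ 0)) (hR v hv hvr).2
    simp only [ContinuousLinearMap.mul_apply, ContinuousLinearMap.one_apply] at h2
    rw [h1, _root_.map_smul] at h2
    exact h2.symm
  have hAj : ∀ v : ℂ, v ≠ 0 → ‖v‖ ≤ r → ∀ j : ℕ, 1 ≤ j → j < k →
      φ j = (-(j : ℂ)) • (R v) (W (φ (j - 1))) + v • (R v) (W (φ j)) := by
    intro v hv hvr j h1 h2
    have hch := hchain j h1 h2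
    have h3 : (N₀ + v • W - z₀ • (1 : H →L[ℂ] H)) (φ j)
        = (-(j : ℂ)) • W (φ (j - 1)) + v • W (φ j) := by
      have : (N₀ + v • W - z₀ • (1 : H →L[ℂ] H)) (φ j)
          = (N₀ - z₀ • (1 : H →L[ℂ] H)) (φ j) + v • W (φ j) := by
        simp only [ContinuousLinearMap.add_apply, ContinuousLinearMap.sub_apply,
          ContinuousLinearMap.smul_apply, ContinuousLinearMap.one_apply]
        abel
      rw [this, hch]
    have h2' := congrArg (fun T : H →L[ℂ] H => T (φ j)) (hR v hv hvr).2
    simp only [ContinuousLinearMap.mul_apply, ContinuousLinearMap.one_apply] at h2'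
    rw [h3, map_add, _root_.map_smul, _root_.map_smul] at h2'
    exact h2'.symm
  -- Part (1)
  have part1 : ∀ j : ℕ, j < k → ∀ v : ℂ, v ≠ 0 → ‖v‖ ≤ r →
      (((1 : H →L[ℂ] H) - v • (R v * W)) ^ (j + 1)) (φ j) = 0 ∧
      (((1 : H →L[ℂ] H) - v • (R v * W)) ^ j) (φ j) ≠ 0 := by
    intro j hj v hv hvr
    set T : H →L[ℂ] H := (1 : H →L[ℂ] H) - v • (R v * W) with hTdef
    have hTapp : ∀ x : H, T x = x - v • (R v) (W x) := by
      intro x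
      simp [hTdef, ContinuousLinearMap.sub_apply, ContinuousLinearMap.smul_apply,
        ContinuousLinearMap.mul_apply, ContinuousLinearMap.one_apply]
    have hT0 : T (φ 0) = 0 := by
      rw [hTapp, ← hA0 v hv hvr, sub_self]
    have hTstep : ∀ i : ℕ, 1 ≤ i → i < k →
        T (φ i) = ((i : ℂ) * v⁻¹) • ((T - 1) (φ (i - 1))) := by
      intro i h1 h2
      have h3 := hAj v hv hvr i h1 h2
      have hsub : (T - 1) (φ (i - 1)) = -(v • (R v) (W (φ (i - 1)))) := by
        simp only [ContinuousLinearMap.sub_apply, ContinuousLinearMap.one_apply, hTapp]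
        abel
      rw [hTapp, hsub, smul_neg, smul_smul, mul_assoc, inv_mul_cancel₀ hv, mul_one,
        ← neg_smul]
      nth_rewrite 1 [h3]
      abel
    have hcomm : ∀ m : ℕ, (T ^ m) * (T - 1) = (T - 1) * (T ^ m) :=
      fun m => (((Commute.refl T).sub_right (Commute.one_right T)).pow_left m)
    have key : ∀ m : ℕ, ∀ i : ℕ, m ≤ i → i < k →
        (T ^ m) (φ i) = (((i.descFactorial m : ℕ) : ℂ) * (v⁻¹) ^ m) •
          (((T - 1) ^ m) (φ (i - m))) := by
      intro m
      induction m with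
      | zero => intro i _ _; simp
      | succ m ih =>
        intro i hmi hik
        obtain ⟨n, rfl⟩ : ∃ n, i = n + 1 :=
          ⟨i - 1, (Nat.succ_pred_eq_of_pos (lt_of_lt_of_le (Nat.succ_pos m) hmi)).symm⟩
        have hstep := hTstep (n + 1) (Nat.succ_le_succ (Nat.zero_le n)) hik
        simp only [Nat.add_sub_cancel] at hstep
        have hc : (T ^ m) ((T - 1) (φ n)) = (T - 1) ((T ^ m) (φ n)) := by
          rw [← ContinuousLinearMap.mul_apply, ← ContinuousLinearMap.mul_apply, hcomm m]
        have hnk : n < k := lt_trans (Nat.lt_succ_self n) hik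
        rw [pow_succ, ContinuousLinearMap.mul_apply, hstep, _root_.map_smul, hc,
          ih n (Nat.succ_le_succ_iff.mp hmi) hnk, _root_.map_smul]
        have hsub2 : (n + 1) - (m + 1) = n - m := by omega
        have hTm : (T - 1) ((((T - 1) ^ m)) (φ (n - m)))
            = (((T - 1) ^ (m + 1))) (φ (n - m)) := by
          rw [← ContinuousLinearMap.mul_apply, ← pow_succ']
        rw [smul_smul, hTm, hsub2, Nat.succ_descFactorial_succ]
        congr 1
        push_cast
        ring
    have hTm1 : ∀ n : ℕ, (((T - 1) ^ n)) (φ 0) = ((-1 : ℂ)) ^ n • φ 0 := by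
      intro n
      induction n with
      | zero => simp
      | succ n ih =>
        rw [pow_succ, ContinuousLinearMap.mul_apply]
        have : (T - 1) (φ 0) = -(φ 0) := by
          simp only [ContinuousLinearMap.sub_apply, ContinuousLinearMap.one_apply, hT0]
          abel
        rw [this, map_neg, ih, pow_succ]
        rw [← neg_smul]
        ring_nf
    have hkey := key j j le_rfl hj
    rw [Nat.sub_self, hTm1 j] at hkey
    constructor
    · rw [pow_succ', ContinuousLinearMap.mul_apply, hkey, _root_.map_smul, _root_.map_smul, hT0,
        smul_zero, smul_zero]
    · rw [hkey]
      have h1 : (((j.descFactorial j : ℕ) : ℂ) * (v⁻¹) ^ j) ≠ 0 := by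
        apply mul_ne_zero
        · exact Nat.cast_ne_zero.mpr (by
            rw [Nat.descFactorial_self]; exact Nat.factorial_ne_zero j)
        · exact pow_ne_zero _ (inv_ne_zero hv)
      exact smul_ne_zero h1 (smul_ne_zero (pow_ne_zero _ (by norm_num)) hφ0ne)
  -- continuity of R on the circle, and integrability
  have hRinv : ∀ w : ℂ, w ≠ 0 → ‖w‖ ≤ r →
      Ring.inverse (N₀ + w • W - z₀ • (1 : H →L[ℂ] H)) = R w := by
    intro w h1 h2
    let u : (H →L[ℂ] H)ˣ :=
      ⟨N₀ + w • W - z₀ • (1 : H →L[ℂ] H), R w, (hR w h1 h2).1, (hR w h1 h2).2⟩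
    exact Ring.inverse_unit u
  have hRcont : ContinuousOn R (Metric.sphere (0 : ℂ) r) := by
    intro v hv
    have hvnorm : ‖v‖ = r := by simpa using hv
    have hvne : v ≠ 0 := by
      intro h; rw [h] at hvnorm; simp at hvnorm; exact absurd hvnorm.symm (ne_of_gt hr)
    have hgc : Continuous fun w : ℂ => N₀ + w • W - z₀ • (1 : H →L[ℂ] H) :=
      (continuous_const.add (continuous_id.smul continuous_const)).sub continuous_const
    let u : (H →L[ℂ] H)ˣ :=
      ⟨N₀ + v • W - z₀ • (1 : H →L[ℂ] H), R v, (hR v hvne hvnorm.le).1, (hR v hvne hvnorm.le).2⟩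
    have hcont : ContinuousAt
        (fun w : ℂ => Ring.inverse (N₀ + w • W - z₀ • (1 : H →L[ℂ] H))) v := by
      have h1 : ContinuousAt (Ring.inverse : (H →L[ℂ] H) → (H →L[ℂ] H))
          (N₀ + v • W - z₀ • (1 : H →L[ℂ] H)) := NormedRing.inverse_continuousAt u
      exact ContinuousAt.comp (x := v) (g := Ring.inverse)
        (f := fun w : ℂ => N₀ + w • W - z₀ • (1 : H →L[ℂ] H)) h1 hgc.continuousAt
    refine hcont.continuousWithinAt.congr ?_ ?_
    · intro w hw
      have hwnorm : ‖w‖ = r := by simpa using hw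
      have hwne : w ≠ 0 := by
        intro h; rw [h] at hwnorm; simp at hwnorm; exact absurd hwnorm.symm (ne_of_gt hr)
      exact (hRinv w hwne hwnorm.le).symm
    · exact (hRinv v hvne hvnorm.le).symm
  have hIntOp : CircleIntegrable (fun v : ℂ => v • R v) 0 r :=
    ContinuousOn.circleIntegrable hr.le (continuousOn_id.smul hRcont)
  -- closed-form Laurent expansion
  have hclosed : ∀ j : ℕ, j < k → ∀ v : ℂ, v ≠ 0 → ‖v‖ ≤ r →
      v • (R v) (W (φ j)) = ∑ m ∈ Finset.range (j + 1),
        (((j.descFactorial m : ℕ) : ℂ) * (v⁻¹) ^ m) • φ (j - m) := by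
    intro j
    induction j with
    | zero =>
      intro _ v hv hvr
      simp [← hA0 v hv hvr]
    | succ n ih =>
      intro hjk v hv hvr
      have hnk : n < k := lt_trans (Nat.lt_succ_self n) hjk
      have h3 := hAj v hv hvr (n + 1) (Nat.succ_le_succ (Nat.zero_le n)) hjk
      simp only [Nat.add_sub_cancel] at h3
      have h4 : v • (R v) (W (φ (n + 1)))
          = φ (n + 1) + (((n : ℂ) + 1)) • (R v) (W (φ n)) := by
        have h3' := h3
        generalize hy : (R v) (W (φ (n + 1))) = y at h3' ⊢
        generalize hx : (R v) (W (φ n)) = x at h3' ⊢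
        rw [h3']
        push_cast
        module
      have h5 : (R v) (W (φ n)) = v⁻¹ • (v • (R v) (W (φ n))) := by
        rw [smul_smul, inv_mul_cancel₀ hv, one_smul]
      rw [h4, h5, ih hnk v hv hvr, Finset.smul_sum, Finset.smul_sum]
      conv_rhs => rw [Finset.sum_range_succ']
      simp only [Nat.descFactorial_zero, Nat.cast_one, pow_zero, mul_one, one_smul,
        Nat.sub_zero, Nat.succ_descFactorial_succ, Nat.succ_sub_succ]
      rw [add_comm]
      congr 1
      refine Finset.sum_congr rfl fun m _ => ?_
      rw [smul_smul, smul_smul]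
      congr 1
      push_cast
      ring
  -- integral of each Laurent term
  have hterm : ∀ (c : ℂ) (m : ℕ) (x : H),
      (∮ v in C(0, r), (c * (v⁻¹) ^ m) • x)
        = (if m = 1 then (2 * (Real.pi : ℂ) * Complex.I) * c else 0) • x := by
    intro c m x
    have hzpow : ∀ v : ℂ, (c * (v⁻¹) ^ m) • x = (c * (v - 0) ^ (-(m : ℤ))) • x := by
      intro v
      rw [sub_zero, zpow_neg, zpow_natCast, inv_pow]
    have : (∮ v in C(0, r), (c * (v⁻¹) ^ m) • x)
        = ∮ v in C(0, r), (c * (v - 0) ^ (-(m : ℤ))) • x := by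
      exact circleIntegral.integral_congr hr.le fun v _ => hzpow v
    rw [this, circleIntegral.integral_smul_const]
    congr 1
    have hmul : (fun v : ℂ => c * (v - 0) ^ (-(m : ℤ)))
        = fun v : ℂ => c • ((v - 0) ^ (-(m : ℤ))) := by
      funext v; simp [smul_eq_mul]
    rw [hmul, circleIntegral.integral_smul]
    by_cases hm : m = 1
    · subst hm
      have h01 : ∀ v : ℂ, (v - 0) ^ (-((1 : ℕ) : ℤ)) = (v - 0)⁻¹ := by
        intro v
        rw [show (-((1 : ℕ) : ℤ)) = -1 by norm_num, zpow_neg_one]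
      rw [circleIntegral.integral_congr hr.le fun v _ => h01 v,
        circleIntegral.integral_sub_inv_of_mem_ball (by simpa using hr), if_pos rfl,
        smul_eq_mul]
      ring
    · have hne : -(m : ℤ) ≠ -1 := by
        intro h
        apply hm
        omega
      rw [circleIntegral.integral_sub_zpow_of_ne hne]
      simp [hm]
  -- each Laurent term is circle-integrable
  have htermInt : ∀ (c : ℂ) (m : ℕ) (x : H),
      CircleIntegrable (fun v : ℂ => (c * (v⁻¹) ^ m) • x) 0 r := by
    intro c m x
    apply ContinuousOn.circleIntegrable hr.le
    apply ContinuousOn.smul _ continuousOn_const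
    apply ContinuousOn.mul continuousOn_const
    apply ContinuousOn.pow
    apply ContinuousOn.inv₀ continuousOn_id
    intro v hv
    have hvnorm : ‖v‖ = r := by simpa using hv
    show v ≠ 0
    intro h; rw [h] at hvnorm; simp at hvnorm; exact absurd hvnorm.symm (ne_of_gt hr)
  -- Part (2)
  have part2 : ∀ j : ℕ, 1 ≤ j → j < k → resA R W r (φ j) = (j : ℂ) • φ (j - 1) := by
    intro j h1 h2
    have hres : resA R W r (φ j)
        = (2 * (Real.pi : ℂ) * Complex.I)⁻¹ •
            ((∮ v in C(0, r), v • R v) (W (φ j))) := by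
      simp [resA, ContinuousLinearMap.mul_apply, ContinuousLinearMap.smul_apply]
    rw [hres, circleIntegral_clm_apply hIntOp]
    have heq : (∮ v in C(0, r), (v • R v) (W (φ j)))
        = ∮ v in C(0, r), ∑ m ∈ Finset.range (j + 1),
            (((j.descFactorial m : ℕ) : ℂ) * (v⁻¹) ^ m) • φ (j - m) := by
      refine circleIntegral.integral_congr hr.le fun v hv => ?_
      have hvnorm : ‖v‖ = r := by simpa using hv
      have hvne : v ≠ 0 := by
        intro h; rw [h] at hvnorm; simp at hvnorm; exact absurd hvnorm.symm (ne_of_gt hr)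
      rw [ContinuousLinearMap.smul_apply]
      exact hclosed j h2 v hvne hvnorm.le
    rw [heq, circleIntegral_finset_sum' _ _ _ _ fun m _ => htermInt _ m _]
    have hsum : ∑ m ∈ Finset.range (j + 1),
        (∮ v in C(0, r), (((j.descFactorial m : ℕ) : ℂ) * (v⁻¹) ^ m) • φ (j - m))
        = ∑ m ∈ Finset.range (j + 1),
          (if m = 1 then (2 * (Real.pi : ℂ) * Complex.I) * ((j.descFactorial m : ℕ) : ℂ)
            else 0) • φ (j - m) :=
      Finset.sum_congr rfl fun m _ => hterm _ m _
    rw [hsum, Finset.sum_eq_single_of_mem 1 (by simp; omega)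
      (fun b _ hb => by rw [if_neg hb, zero_smul])]
    rw [if_pos rfl, Nat.descFactorial_one, smul_smul, ← mul_assoc, inv_mul_cancel₀ hπ, one_mul]
  -- Part (3)
  have part3 : ∀ j : ℕ, j < k → ((resA R W r) ^ j) (φ j) = ((j.factorial : ℕ) : ℂ) • φ 0 := by
    intro j
    induction j with
    | zero => intro _; simp
    | succ n ih =>
      intro h
      have hnk : n < k := lt_trans (Nat.lt_succ_self n) h
      rw [pow_succ, ContinuousLinearMap.mul_apply,
        part2 (n + 1) (Nat.succ_le_succ (Nat.zero_le n)) h]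
      simp only [Nat.add_sub_cancel]
      rw [_root_.map_smul, ih hnk, smul_smul]
      congr 1
      rw [Nat.factorial_succ]
      push_cast
      ring
  refine ⟨part1, part2, ?_⟩
  have hklt : k - 1 < k := by omega
  have h3 := part3 (k - 1) hklt
  refine ⟨((((k - 1).factorial : ℕ) : ℂ))⁻¹ • φ (k - 1), ?_⟩
  rw [_root_.map_smul, h3, smul_smul, inv_mul_cancel₀, one_smul]
  exact Nat.cast_ne_zero.mpr (Nat.factorial_ne_zero (k - 1))
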